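/- Let F be a field of characteristic ≠ 2, let c₁, c₂ ∈ F, and let H = ℍ[F, c₁, c₂] be the quaternion algebra over F with basis 1, i, j, k where i² = c₁, j² = c₂, ij = k = −ji, with its standard (conjugation) involution x ↦ x̄. For 0 ≠ ν ∈ F define a new product on H by x∘y := xy + ((ν−1)/2)(x'y' + y'x'), where x' := (x − x̄)/2. Then the algebra (H, ∘) is unital with unit 1, flexible ((x∘y)∘x = x∘(y∘x)), satisfies the Jordan identity ((x∘y)∘(x∘x) = x∘(y∘(x∘x))), and every operator D_{x,y} := L_{x∘y − y∘x} − [L_x, L_y] (left multiplications taken with respect to ∘) is a derivation of (H, ∘); that is, the scaled quaternion algebra H^{[ν]} = (H, ∘) belongs to the variety 𝒱. -/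

import Mathlib

open Quaternion

/-- The "vector part" `x' = (x − x̄)/2` of a quaternion, where `x ↦ x̄ = star x`
is the standard (conjugation) involution. -/
noncomputable def qvec {F : Type*} [Field F] {c₁ c₂ : F}
    (x : ℍ[F, c₁, c₂]) : ℍ[F, c₁, c₂] :=
  (2⁻¹ : F) • (x - star x)

/-- The product `x∘y := xy + ((ν−1)/2)(x'y' + y'x')` of the scaled quaternion
algebra `H^{[ν]}`. -/
noncomputable def nuProd {F : Type*} [Field F] (c₁ c₂ ν : F)
    (x y : ℍ[F, c₁, c₂]) : ℍ[F, c₁, c₂] :=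
  x * y + ((ν - 1) / 2) • (qvec x * qvec y + qvec y * qvec x)

/-- `D_{x,y} = L_{[x,y]} − [L_x,L_y]` for the product `∘` of `H^{[ν]}`,
applied to `c`. -/
noncomputable def nuDer {F : Type*} [Field F] (c₁ c₂ ν : F)
    (x y c : ℍ[F, c₁, c₂]) : ℍ[F, c₁, c₂] :=
  nuProd c₁ c₂ ν (nuProd c₁ c₂ ν x y - nuProd c₁ c₂ ν y x) c -
    (nuProd c₁ c₂ ν x (nuProd c₁ c₂ ν y c) -
      nuProd c₁ c₂ ν y (nuProd c₁ c₂ ν x c))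


lemma qvec_eq {F : Type*} [Field F] {c₁ c₂ : F} (hchar : (2 : F) ≠ 0)
    (x : ℍ[F, c₁, c₂]) : qvec x = ⟨0, x.imI, x.imJ, x.imK⟩ := by
  unfold qvec
  ext <;> simp <;> field_simp <;> ring

lemma nuProd_eq {F : Type*} [Field F] {c₁ c₂ : F} (ν : F) (hchar : (2 : F) ≠ 0)
    (x y : ℍ[F, c₁, c₂]) :
    nuProd c₁ c₂ ν x y = x * y +
      ((ν - 1) * (c₁ * x.imI * y.imI + c₂ * x.imJ * y.imJ - c₁ * c₂ * x.imK * y.imK)) •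
        (1 : ℍ[F, c₁, c₂]) := by
  unfold nuProd
  rw [qvec_eq hchar, qvec_eq hchar]
  ext <;> simp [QuaternionAlgebra.re_mul, QuaternionAlgebra.imI_mul,
    QuaternionAlgebra.imJ_mul, QuaternionAlgebra.imK_mul] <;>
    (try field_simp) <;> (try ring_nf) <;> tauto

set_option maxHeartbeats 4000000 in
/-- Let `F` be a field of characteristic `≠ 2`, `H = ℍ[F, c₁, c₂]` the quaternion
algebra with its standard involution, and `0 ≠ ν ∈ F`.  Then the scaled
quaternion algebra `H^{[ν]} = (H, ∘)`, `x∘y := xy + ((ν−1)/2)(x'y' + y'x')` with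
`x' = (x − x̄)/2`, is unital with unit `1`, flexible, satisfies the Jordan
identity, and every operator `D_{x,y}` (taken with respect to `∘`) is a
derivation of `(H, ∘)`; that is, `H^{[ν]}` belongs to the variety `𝒱`. -/
theorem stmt16 {F : Type*} [Field F] (hchar : (2 : F) ≠ 0)
    (c₁ c₂ ν : F) (hν : ν ≠ 0) :
    (∀ x : ℍ[F, c₁, c₂], nuProd c₁ c₂ ν 1 x = x ∧ nuProd c₁ c₂ ν x 1 = x) ∧
    (∀ x y : ℍ[F, c₁, c₂],
      nuProd c₁ c₂ ν (nuProd c₁ c₂ ν x y) x =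
        nuProd c₁ c₂ ν x (nuProd c₁ c₂ ν y x)) ∧
    (∀ x y : ℍ[F, c₁, c₂],
      nuProd c₁ c₂ ν (nuProd c₁ c₂ ν x y) (nuProd c₁ c₂ ν x x) =
        nuProd c₁ c₂ ν x (nuProd c₁ c₂ ν y (nuProd c₁ c₂ ν x x))) ∧
    (∀ x y a b : ℍ[F, c₁, c₂],
      nuDer c₁ c₂ ν x y (nuProd c₁ c₂ ν a b) =
        nuProd c₁ c₂ ν (nuDer c₁ c₂ ν x y a) b +
          nuProd c₁ c₂ ν a (nuDer c₁ c₂ ν x y b)) := by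
  refine ⟨fun x => ?_, fun x y => ?_, fun x y => ?_, fun x y a b => ?_⟩
  · constructor <;>
    · simp only [nuProd_eq ν hchar]
      ext <;>
        simp [QuaternionAlgebra.re_mul, QuaternionAlgebra.imI_mul,
          QuaternionAlgebra.imJ_mul, QuaternionAlgebra.imK_mul] <;> ring
  · simp only [nuProd_eq ν hchar]
    ext <;>
      simp [QuaternionAlgebra.re_mul, QuaternionAlgebra.imI_mul,
        QuaternionAlgebra.imJ_mul, QuaternionAlgebra.imK_mul] <;> ring
  · simp only [nuProd_eq ν hchar]
    ext <;>
      simp [QuaternionAlgebra.re_mul, QuaternionAlgebra.imI_mul,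
        QuaternionAlgebra.imJ_mul, QuaternionAlgebra.imK_mul] <;> ring
  · simp only [nuDer, nuProd_eq ν hchar]
    ext <;>
      simp [QuaternionAlgebra.re_mul, QuaternionAlgebra.imI_mul,
        QuaternionAlgebra.imJ_mul, QuaternionAlgebra.imK_mul] <;> ring
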